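/- arXiv:2005.01551 — 3 statements merged into one kernel-verified Lean document; each statement's English description precedes it below -/
import Mathlib

section
/- Flatness improvement lemma: For every μ > 0 and K > 0 there exists a constant κ_μ = κ(μ, n, K) > 0 with the following property: if ψ ∈ C(B₁) satisfies 0 ≤ ψ ≤ K in the unit ball B₁ ⊂ ℝⁿ, 0 < κ ≤ κ_μ, and v ∈ C(B₁) satisfies v(0) = 0, 0 ≤ v ≤ 1 in B₁, and v is a viscosity solution of Δ∞v = κ⁴ψ in B₁, then sup_{B_{1/2}} v ≤ μ. -/
open Set Metric Filter MeasureTheory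

/-- The infinity Laplacian of a (C²) function `φ` at `x`:
`Δ∞φ(x) = Σ_{i,j} ∂_iφ(x) ∂_jφ(x) ∂_{ij}φ(x)`. -/
noncomputable def infLap {n : ℕ} (φ : EuclideanSpace ℝ (Fin n) → ℝ)
    (x : EuclideanSpace ℝ (Fin n)) : ℝ :=
  ∑ i : Fin n, ∑ j : Fin n,
    fderiv ℝ φ x (EuclideanSpace.single i 1) * fderiv ℝ φ x (EuclideanSpace.single j 1) *
      fderiv ℝ (fun y => fderiv ℝ φ y (EuclideanSpace.single i 1)) x (EuclideanSpace.single j 1)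

/-- `u` is a viscosity supersolution of `Δ∞u = F(x, u(x))` in `Ω`. -/
def IsViscSupersol {n : ℕ} (Ω : Set (EuclideanSpace ℝ (Fin n)))
    (u : EuclideanSpace ℝ (Fin n) → ℝ)
    (F : EuclideanSpace ℝ (Fin n) → ℝ → ℝ) : Prop :=
  ∀ φ : EuclideanSpace ℝ (Fin n) → ℝ, ContDiff ℝ 2 φ →
    ∀ x₀ ∈ Ω, φ x₀ = u x₀ → IsLocalMin (fun x => u x - φ x) x₀ →
      infLap φ x₀ ≤ F x₀ (φ x₀)

/-- `u` is a viscosity subsolution of `Δ∞u = F(x, u(x))` in `Ω`. -/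
def IsViscSubsol {n : ℕ} (Ω : Set (EuclideanSpace ℝ (Fin n)))
    (u : EuclideanSpace ℝ (Fin n) → ℝ)
    (F : EuclideanSpace ℝ (Fin n) → ℝ → ℝ) : Prop :=
  ∀ φ : EuclideanSpace ℝ (Fin n) → ℝ, ContDiff ℝ 2 φ →
    ∀ x₀ ∈ Ω, φ x₀ = u x₀ → IsLocalMax (fun x => u x - φ x) x₀ →
      F x₀ (φ x₀) ≤ infLap φ x₀

/-- `u` is a viscosity solution of `Δ∞u = F(x, u(x))` in `Ω`. -/
def IsViscSol {n : ℕ} (Ω : Set (EuclideanSpace ℝ (Fin n)))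
    (u : EuclideanSpace ℝ (Fin n) → ℝ)
    (F : EuclideanSpace ℝ (Fin n) → ℝ → ℝ) : Prop :=
  IsViscSupersol Ω u F ∧ IsViscSubsol Ω u F

/-!
A barrier argument gives a one-step Harnack inequality, which is then chained along the segment
from `0` to `x`. Around `y`, the radial function `φ = A (R - r) - B (R² - r²)`, `r = |· - y|`, has
`Δ∞φ = φ'(r)² φ''(r) = 2B (2Br - A)²`. If `v(y) > 2BR²` and `A` is chosen with `φ(y) = v(y)`, then
`A - 2Br > BR` on `B_R(y)`, so `Δ∞φ > 2B³R² > κ⁴ψ` for small `κ`; since also `φ = 0 ≤ v` on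
`∂B_R(y)`, the supersolution property forbids `v - φ` to attain a negative minimum, so `φ ≤ v` on
`B_R(y)`. Evaluating at `|z - y| ≤ R/2` yields `v(y) ≤ 2 v(z) + 2BR²`. With `R = 1/4`, four steps
from `v(0) = 0` give `v(x) ≤ 15B/8 < μ` for `B = μ/2`.
-/

open Real Topology

theorem le_two_pow_mul_add_of_step {E : Type*} [SeminormedAddCommGroup E] [NormedSpace ℝ E]
    {u : E → ℝ} {c : ℝ} {x : E} {N : ℕ} (hN : N ≠ 0)
    (hstep : ∀ y z : E, ‖y‖ ≤ ‖x‖ → ‖z - y‖ ≤ ‖x‖ / N → u y ≤ 2 * u z + c) :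
    u x ≤ 2 ^ N * u 0 + (2 ^ N - 1) * c := by
  have hN' : (0 : ℝ) < N := by positivity
  suffices h : ∀ k ≤ N, u (((k : ℝ) / N) • x) ≤ 2 ^ k * u 0 + (2 ^ k - 1) * c by
    simpa [hN'.ne'] using h N le_rfl
  intro k hk
  induction k with
  | zero => simp
  | succ k ih =>
    have hk' : ((k : ℝ) + 1) / N ≤ 1 := by
      rw [div_le_one hN']; exact_mod_cast hk
    have hy : ‖(((k + 1 : ℕ) : ℝ) / N) • x‖ ≤ ‖x‖ := by
      rw [norm_smul, Real.norm_of_nonneg (by positivity)]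
      push_cast
      exact mul_le_of_le_one_left (norm_nonneg x) hk'
    have hz : ‖((k : ℝ) / N) • x - (((k + 1 : ℕ) : ℝ) / N) • x‖ = ‖x‖ / N := by
      rw [← sub_smul, norm_smul]
      push_cast
      rw [show (k : ℝ) / N - (k + 1) / N = -(1 / N) by ring, norm_neg,
        Real.norm_of_nonneg (by positivity)]
      ring
    have hstep_k := hstep _ _ hy hz.le
    have ih_k := ih (by omega)
    rw [pow_succ]
    linarith

theorem exists_contDiff_eventuallyEq {E : Type*} [NormedAddCommGroup E] [NormedSpace ℝ E]
    [HasContDiffBump E] {φ : E → ℝ} {x₀ : E} {k : ℕ} (hφ : ContDiffAt ℝ k φ x₀) :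
    ∃ ψ : E → ℝ, ContDiff ℝ k ψ ∧ ψ =ᶠ[𝓝 x₀] φ := by
  obtain ⟨ε, hε, hball⟩ := Metric.eventually_nhds_iff_ball.mp (hφ.eventually (by simp))
  let χ : ContDiffBump x₀ := ⟨ε / 4, ε / 2, by positivity, by linarith⟩
  refine ⟨fun x => χ x * φ x, contDiff_iff_contDiffAt.2 fun z => ?_, ?_⟩
  · by_cases hz : z ∈ ball x₀ ε
    · exact χ.contDiffAt.mul (hball z hz)
    · have hχz : z ∉ tsupport χ := by
        rw [χ.tsupport_eq, mem_closedBall, not_le]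
        rw [mem_ball, not_lt] at hz
        exact lt_of_lt_of_le (show ε / 2 < ε by linarith) hz
      refine contDiffAt_const (c := (0 : ℝ)) |>.congr_of_eventuallyEq ?_
      filter_upwards [notMem_tsupport_iff_eventuallyEq.mp hχz] with w hw
      simp [hw]
  · filter_upwards [χ.eventuallyEq_one] with w hw
    simp [hw]

theorem hasFDerivAt_norm_sub_sq {E : Type*} [NormedAddCommGroup E] [InnerProductSpace ℝ E]
    (x y : E) :
    HasFDerivAt (fun w => ‖w - y‖ ^ 2)
      (2 • (innerSL ℝ (x - y)).comp (ContinuousLinearMap.id ℝ _)) x :=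
  ((hasFDerivAt_id x).sub_const y).norm_sq

section

variable {n : ℕ}

theorem Filter.EventuallyEq.infLap_eq {φ ψ : EuclideanSpace ℝ (Fin n) → ℝ}
    {x : EuclideanSpace ℝ (Fin n)} (h : φ =ᶠ[𝓝 x] ψ) : infLap φ x = infLap ψ x := by
  have h' : ∀ i : Fin n, (fun z => fderiv ℝ φ z (EuclideanSpace.single i 1))
      =ᶠ[𝓝 x] (fun z => fderiv ℝ ψ z (EuclideanSpace.single i 1)) := fun i => by
    filter_upwards [h.eventuallyEq_nhds] with z hz
    rw [hz.fderiv_eq]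
  unfold infLap
  exact Finset.sum_congr rfl fun i _ => Finset.sum_congr rfl fun j _ => by
    rw [h.fderiv_eq, (h' i).fderiv_eq]

theorem infLap_add_const (φ : EuclideanSpace ℝ (Fin n) → ℝ) (c : ℝ)
    (x : EuclideanSpace ℝ (Fin n)) : infLap (fun z => φ z + c) x = infLap φ x := by
  simp only [infLap, fderiv_add_const]

theorem infLap_comp_norm_sub_sq {f f' : ℝ → ℝ} {f'' : ℝ} {x y : EuclideanSpace ℝ (Fin n)}
    (hf : ∀ᶠ s in 𝓝 (‖x - y‖ ^ 2), HasDerivAt f (f' s) s)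
    (hf' : HasDerivAt f' f'' (‖x - y‖ ^ 2)) :
    infLap (fun w => f (‖w - y‖ ^ 2)) x =
      8 * f' (‖x - y‖ ^ 2) ^ 3 * ‖x - y‖ ^ 2 + 16 * f' (‖x - y‖ ^ 2) ^ 2 * f'' * ‖x - y‖ ^ 4 := by
  set t := ‖x - y‖ ^ 2 with ht
  have hgrad : ∀ᶠ w in 𝓝 x, ∀ i, fderiv ℝ (fun w => f (‖w - y‖ ^ 2)) w
      (EuclideanSpace.single i 1) = f' (‖w - y‖ ^ 2) * (2 * (w i - y i)) := by
    have hcont : Tendsto (fun w : EuclideanSpace ℝ (Fin n) => ‖w - y‖ ^ 2) (𝓝 x) (𝓝 t) :=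
      ((continuous_id.sub continuous_const).norm.pow 2).tendsto x
    filter_upwards [hcont.eventually hf] with w hw i
    have hφ : HasFDerivAt (fun w => f (‖w - y‖ ^ 2)) _ w :=
      hw.comp_hasFDerivAt w (hasFDerivAt_norm_sub_sq w y)
    rw [hφ.fderiv]
    simp [EuclideanSpace.inner_single_right]
  have hhess : ∀ i j, fderiv ℝ (fun w => f' (‖w - y‖ ^ 2) * (2 * (w i - y i))) x
      (EuclideanSpace.single j 1) =
        f'' * (2 * (x j - y j)) * (2 * (x i - y i)) + f' t * (2 * if i = j then 1 else 0) := by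
    intro i j
    have hcoord : HasFDerivAt (fun w : EuclideanSpace ℝ (Fin n) => 2 * (w i - y i))
        ((2 : ℝ) • (EuclideanSpace.proj i : EuclideanSpace ℝ (Fin n) →L[ℝ] ℝ)) x :=
      (((EuclideanSpace.proj (𝕜 := ℝ) i).hasFDerivAt (x := x)).sub_const (y i)).const_mul 2
    have hf'Q : HasFDerivAt (fun w => f' (‖w - y‖ ^ 2)) _ x :=
      hf'.comp_hasFDerivAt x (hasFDerivAt_norm_sub_sq x y)
    rw [(hf'Q.fun_mul hcoord).fderiv]
    simp only [← ht, map_sub, ContinuousLinearMap.comp_id, add_apply, smul_apply, sub_apply,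
      PiLp.proj_apply, PiLp.single_apply, coe_innerSL_apply, EuclideanSpace.inner_single_right,
      Real.ringHom_apply, smul_eq_mul, nsmul_eq_mul, Nat.cast_ofNat, mul_ite, mul_one, mul_zero,
      one_mul]
    ring
  have hnorm : ∑ i, (x i - y i) ^ 2 = t := by
    simp [ht, EuclideanSpace.norm_sq_eq]
  unfold infLap
  calc
    _ = ∑ i, ∑ j, (16 * f' t ^ 2 * f'' * (x i - y i) ^ 2 * (x j - y j) ^ 2
        + if i = j then 8 * f' t ^ 3 * (x i - y i) ^ 2 else 0) := by
      refine Finset.sum_congr rfl fun i _ => Finset.sum_congr rfl fun j _ => ?_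
      have hgrad_i : (fun w => fderiv ℝ (fun w => f (‖w - y‖ ^ 2)) w (EuclideanSpace.single i 1))
          =ᶠ[𝓝 x] fun w => f' (‖w - y‖ ^ 2) * (2 * (w i - y i)) :=
        hgrad.mono fun w hw => hw i
      rw [hgrad.self_of_nhds i, hgrad.self_of_nhds j, hgrad_i.fderiv_eq, hhess, ← ht]
      split_ifs with hij
      · subst hij; ring
      · ring
    _ = 16 * f' t ^ 2 * f'' * (∑ i, (x i - y i) ^ 2) ^ 2 + 8 * f' t ^ 3 * ∑ i, (x i - y i) ^ 2 := by
      simp only [Finset.sum_add_distrib, Finset.sum_ite_eq, Finset.mem_univ, if_true,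
        ← Finset.mul_sum, ← Finset.sum_mul, sq (∑ i, _)]
      ring
    _ = _ := by rw [hnorm]; ring

theorem infLap_comp_norm_sub {g g' : ℝ → ℝ} {g'' : ℝ} {x y : EuclideanSpace ℝ (Fin n)}
    (hxy : x ≠ y) (hg : ∀ᶠ r in 𝓝 ‖x - y‖, HasDerivAt g (g' r) r)
    (hg' : HasDerivAt g' g'' ‖x - y‖) :
    infLap (fun w => g ‖w - y‖) x = g' ‖x - y‖ ^ 2 * g'' := by
  set r := ‖x - y‖
  have hr : 0 < r := norm_sub_pos_iff.mpr hxy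
  have hsqrt_r : √(r ^ 2) = r := sqrt_sq hr.le
  have hfun : (fun w => g ‖w - y‖) = fun w => (g ∘ sqrt) (‖w - y‖ ^ 2) := by
    funext w; simp [sqrt_sq (norm_nonneg _)]
  have hf : ∀ᶠ s in 𝓝 (r ^ 2), HasDerivAt (g ∘ sqrt) (g' √s / (2 * √s)) s := by
    have hcont : Tendsto sqrt (𝓝 (r ^ 2)) (𝓝 r) := by
      have h := continuous_sqrt.tendsto (r ^ 2)
      rwa [hsqrt_r] at h
    filter_upwards [hcont.eventually hg, eventually_gt_nhds (pow_pos hr 2)] with s hs hs0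
    exact (hs.comp s (hasDerivAt_sqrt hs0.ne')).congr_deriv (by ring)
  have hsqrt : HasDerivAt sqrt (1 / (2 * r)) (r ^ 2) := by
    have h := hasDerivAt_sqrt (pow_pos hr 2).ne'
    rwa [hsqrt_r] at h
  have hf' : HasDerivAt (fun s => g' √s / (2 * √s))
      ((g'' * (1 / (2 * r)) * (2 * r) - g' r * (2 * (1 / (2 * r)))) / (2 * r) ^ 2) (r ^ 2) := by
    have h := (hg'.comp_of_eq (r ^ 2) hsqrt hsqrt_r.symm).div (hsqrt.const_mul 2)
      (by simp [hsqrt_r, hr.ne'])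
    simp only [Function.comp_apply, hsqrt_r] at h
    exact h
  rw [hfun, infLap_comp_norm_sub_sq (f' := fun s => g' √s / (2 * √s)) hf hf', hsqrt_r]
  field_simp
  ring

theorem IsViscSupersol.infLap_le_of_contDiffAt {Ω : Set (EuclideanSpace ℝ (Fin n))}
    {u φ : EuclideanSpace ℝ (Fin n) → ℝ} {F : EuclideanSpace ℝ (Fin n) → ℝ → ℝ}
    (hu : IsViscSupersol Ω u F) {x₀ : EuclideanSpace ℝ (Fin n)} (hφ : ContDiffAt ℝ 2 φ x₀)
    (hx₀ : x₀ ∈ Ω) (heq : φ x₀ = u x₀) (hmin : IsLocalMin (fun x => u x - φ x) x₀) :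
    infLap φ x₀ ≤ F x₀ (φ x₀) := by
  obtain ⟨ψ, hψ, hψφ⟩ := exists_contDiff_eventuallyEq hφ
  have hψmin : IsLocalMin (fun x => u x - ψ x) x₀ :=
    hmin.congr (hψφ.mono fun x hx => by simp [hx])
  have h := hu ψ hψ x₀ hx₀ (hψφ.self_of_nhds.trans heq) hψmin
  rwa [hψφ.infLap_eq, hψφ.self_of_nhds] at h

theorem IsViscSupersol.le_of_lt_infLap {Ω : Set (EuclideanSpace ℝ (Fin n))}
    {u φ : EuclideanSpace ℝ (Fin n) → ℝ} {F : EuclideanSpace ℝ (Fin n) → ℝ → ℝ}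
    (hu : IsViscSupersol Ω u F) {y : EuclideanSpace ℝ (Fin n)} {R : ℝ}
    (hΩ : closedBall y R ⊆ Ω) (huc : ContinuousOn u (closedBall y R))
    (hφc : ContinuousOn φ (closedBall y R))
    (hφ : ∀ x ∈ ball y R, x ≠ y → ContDiffAt ℝ 2 φ x ∧ F x (u x) < infLap φ x)
    (hcenter : φ y ≤ u y) (hsphere : ∀ x ∈ sphere y R, φ x ≤ u x) :
    ∀ x ∈ closedBall y R, φ x ≤ u x := by
  intro x hx
  obtain ⟨xm, hxm, hmin⟩ := (isCompact_closedBall y R).exists_isMinOn ⟨x, hx⟩ (huc.sub hφc)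
  by_contra! hux
  set m := u xm - φ xm with hm_def
  have hm : m < 0 := by linarith [show m ≤ u x - φ x from hmin hx]
  have hxm_ne : xm ≠ y := by
    rintro rfl
    linarith
  have hxm_ball : xm ∈ ball y R := by
    refine lt_of_le_of_ne (mem_closedBall.mp hxm) fun hR => ?_
    linarith [hsphere xm (mem_sphere.mpr hR)]
  obtain ⟨hφ_smooth, hF_lt⟩ := hφ xm hxm_ball hxm_ne
  have htouch : IsLocalMin (fun w => u w - (φ w + m)) xm := by
    filter_upwards [isOpen_ball.mem_nhds hxm_ball] with w hw
    have : m ≤ u w - φ w := hmin (ball_subset_closedBall hw)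
    linarith
  have h := hu.infLap_le_of_contDiffAt (hφ_smooth.add contDiffAt_const) (hΩ hxm)
    (by rw [hm_def]; ring) htouch
  rw [infLap_add_const, show φ xm + m = u xm by rw [hm_def]; ring] at h
  linarith

theorem IsViscSupersol.le_two_mul_add {Ω : Set (EuclideanSpace ℝ (Fin n))}
    {u : EuclideanSpace ℝ (Fin n) → ℝ} {F : EuclideanSpace ℝ (Fin n) → ℝ → ℝ}
    (hu : IsViscSupersol Ω u F) {y z : EuclideanSpace ℝ (Fin n)} {R B : ℝ} (hR : 0 < R)
    (hB : 0 < B) (hΩ : closedBall y R ⊆ Ω) (huc : ContinuousOn u (closedBall y R))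
    (hu0 : ∀ x ∈ closedBall y R, 0 ≤ u x) (hF : ∀ x ∈ ball y R, F x (u x) < 2 * B ^ 3 * R ^ 2)
    (hz : ‖z - y‖ ≤ R / 2) :
    u y ≤ 2 * u z + 2 * B * R ^ 2 := by
  have hz_mem : z ∈ closedBall y R := by
    rw [mem_closedBall, dist_eq_norm]; linarith
  rcases le_or_gt (u y) (2 * B * R ^ 2) with hsmall | hlarge
  · linarith [hu0 z hz_mem]
  set A := (u y + B * R ^ 2) / R
  have hAR : A * R = u y + B * R ^ 2 := div_mul_cancel₀ _ hR.ne'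
  have hA : 3 * B * R < A := by nlinarith
  have hA0 : 0 < A := lt_trans (by positivity) hA
  set g : ℝ → ℝ := fun r => A * (R - r) - B * (R ^ 2 - r ^ 2) with hg_def
  have hg : ∀ r, HasDerivAt g (2 * B * r - A) r := fun r => by
    have h := (((hasDerivAt_id' r).const_sub R).const_mul A).sub
      (((hasDerivAt_pow 2 r).const_sub (R ^ 2)).const_mul B)
    exact h.congr_deriv (by push_cast; ring)
  have hg' : ∀ r, HasDerivAt (fun r => 2 * B * r - A) (2 * B) r := fun r => by
    simpa using ((hasDerivAt_id r).const_mul (2 * B)).sub_const A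
  have hbarrier : ∀ x ∈ closedBall y R, g ‖x - y‖ ≤ u x := by
    refine hu.le_of_lt_infLap hΩ huc (by fun_prop) (fun x hx hxy => ⟨?_, ?_⟩) ?_ ?_
    · have hnorm : ContDiffAt ℝ 2 (fun w => ‖w - y‖) x :=
        (contDiffAt_norm ℝ (sub_ne_zero.2 hxy)).comp x (contDiffAt_id.sub contDiffAt_const)
      exact (contDiffAt_const.mul (contDiffAt_const.sub hnorm)).sub
        (contDiffAt_const.mul (contDiffAt_const.sub (hnorm.pow 2)))
    · rw [infLap_comp_norm_sub hxy (Filter.Eventually.of_forall hg) (hg' _)]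
      have hr : ‖x - y‖ < R := by rwa [mem_ball, dist_eq_norm] at hx
      have hgap : (B * R) ^ 2 < (2 * B * ‖x - y‖ - A) ^ 2 := by
        rw [← neg_sq (2 * B * ‖x - y‖ - A)]
        exact pow_lt_pow_left₀ (by nlinarith) (by positivity) two_ne_zero
      nlinarith [hF x hx]
    · simp [hg_def, ← hAR]
    · intro x hx
      have hux := hu0 x (sphere_subset_closedBall hx)
      rw [mem_sphere, dist_eq_norm] at hx
      simp [hg_def, hx, hux]
  have hgz : A * R - 2 * B * R ^ 2 ≤ 2 * g ‖z - y‖ := by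
    have : A * ‖z - y‖ ≤ A * (R / 2) := mul_le_mul_of_nonneg_left hz hA0.le
    simp only [hg_def]
    nlinarith [sq_nonneg ‖z - y‖]
  linarith [hbarrier z hz_mem, mul_pos hB (pow_pos hR 2)]

end

/-- Flatness improvement lemma (Lemma 2.2). -/
theorem flatness_improvement {n : ℕ} (μ K : ℝ) (hμ : 0 < μ) (hK : 0 < K) :
    ∃ κμ > (0 : ℝ), ∀ ψ : EuclideanSpace ℝ (Fin n) → ℝ,
      ContinuousOn ψ (ball (0 : EuclideanSpace ℝ (Fin n)) 1) →
      (∀ x ∈ ball (0 : EuclideanSpace ℝ (Fin n)) 1, 0 ≤ ψ x ∧ ψ x ≤ K) →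
      ∀ κ : ℝ, 0 < κ → κ ≤ κμ →
      ∀ v : EuclideanSpace ℝ (Fin n) → ℝ,
        ContinuousOn v (ball (0 : EuclideanSpace ℝ (Fin n)) 1) →
        v 0 = 0 →
        (∀ x ∈ ball (0 : EuclideanSpace ℝ (Fin n)) 1, 0 ≤ v x ∧ v x ≤ 1) →
        IsViscSol (ball (0 : EuclideanSpace ℝ (Fin n)) 1) v (fun x _ => κ ^ 4 * ψ x) →
        ∀ x ∈ ball (0 : EuclideanSpace ℝ (Fin n)) (1 / 2), v x ≤ μ := by
  set B := μ / 2 with hB_def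
  have hB : 0 < B := by positivity
  refine ⟨(B ^ 3 / (16 * K)) ^ ((4 : ℕ)⁻¹ : ℝ), by positivity, ?_⟩
  intro ψ _ hψ κ hκ hκμ v hvc hv0 hv hsol x hx
  have hκ4 : κ ^ 4 * K ≤ B ^ 3 / 16 := by
    have h := pow_le_pow_left₀ hκ.le hκμ 4
    rw [rpow_inv_natCast_pow (by positivity) four_ne_zero] at h
    calc κ ^ 4 * K ≤ B ^ 3 / (16 * K) * K := by gcongr
      _ = B ^ 3 / 16 := by field_simp
  have hx' : ‖x‖ < 1 / 2 := by rwa [mem_ball, dist_zero_right] at hx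
  have hstep : ∀ y z, ‖y‖ ≤ ‖x‖ → ‖z - y‖ ≤ ‖x‖ / (4 : ℕ) →
      v y ≤ 2 * v z + 2 * B * (1 / 4) ^ 2 := by
    intro y z hy hz
    have hsub : closedBall y (1 / 4) ⊆ ball 0 1 :=
      closedBall_subset_ball' (by rw [dist_zero_right]; linarith)
    refine hsol.1.le_two_mul_add (by norm_num) hB hsub (hvc.mono hsub)
      (fun w hw => (hv w (hsub hw)).1) (fun w hw => ?_) (by push_cast at hz; linarith)
    have := (hψ w (hsub (ball_subset_closedBall hw))).2
    have : κ ^ 4 * ψ w ≤ κ ^ 4 * K := by gcongr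
    nlinarith [pow_pos hB 3]
  have := le_two_pow_mul_add_of_step four_ne_zero hstep
  rw [hv0] at this
  linarith [hB_def]
end

section
/- Exponential barrier with gradient bounded below: Let Ω ⊂ ℝⁿ be open, S > 0, η > 0, and let w ∈ C²(Ω) satisfy |w(x)| ≤ S, Δ∞w(x) ≥ 0 and |∇w(x)| ≥ η for all x ∈ Ω. Then the function v(x) := e^{w(x)} + w(x) satisfies Δ∞v(x) ≥ e^{−S} η⁴ for all x ∈ Ω. -/
open Set Metric Filter MeasureTheory

/-! The infinity Laplacian is the second derivative evaluated on the gradient twice,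
`Δ∞φ = D²φ(∇φ, ∇φ)`. For a composition with a real function this gives
`Δ∞(f ∘ w) = f'(w)² (f''(w) |∇w|⁴ + f'(w) Δ∞w)`. For `f = exp + id` we have `f' = e^w + 1 ≥ 1`
and `f'' = e^w ≥ e^{-S}`, so both terms are nonnegative and the first is at least `e^{-S} η⁴`. -/

open InnerProductSpace
open scoped Gradient Topology

theorem ContDiffAt.hasFDerivAt_fderiv {𝕜 E F : Type*} [NontriviallyNormedField 𝕜]
    [NormedAddCommGroup E] [NormedSpace 𝕜 E] [NormedAddCommGroup F] [NormedSpace 𝕜 F]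
    {w : E → F} {x : E} (hw : ContDiffAt 𝕜 2 w x) :
    HasFDerivAt (fderiv 𝕜 w) (fderiv 𝕜 (fderiv 𝕜 w) x) x :=
  ((hw.fderiv_right le_rfl).differentiableAt one_ne_zero).hasFDerivAt

section

variable {n : ℕ} {φ : EuclideanSpace ℝ (Fin n) → ℝ} {x : EuclideanSpace ℝ (Fin n)}

theorem fderiv_apply_single_eq_gradient (i : Fin n) :
    fderiv ℝ φ x (EuclideanSpace.single i 1) = ∇ φ x i := by
  rw [← inner_gradient_left, EuclideanSpace.inner_single_right]
  simp

theorem infLap_eq_of_hasFDerivAt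
    {D : EuclideanSpace ℝ (Fin n) →L[ℝ] EuclideanSpace ℝ (Fin n) →L[ℝ] ℝ}
    (hD : HasFDerivAt (fderiv ℝ φ) D x) :
    infLap φ x = D (∇ φ x) (∇ φ x) := by
  have hpartial : ∀ i j, fderiv ℝ (fun y => fderiv ℝ φ y (EuclideanSpace.single i 1)) x
      (EuclideanSpace.single j 1) = D (EuclideanSpace.single j 1) (EuclideanSpace.single i 1) :=
    fun i j => by
      rw [(hD.clm_apply (hasFDerivAt_const _ x)).fderiv]
      simp
  have hexpand : ∇ φ x = ∑ i, ∇ φ x i • EuclideanSpace.single i 1 := by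
    simpa using ((EuclideanSpace.basisFun (Fin n) ℝ).sum_repr (∇ φ x)).symm
  conv_rhs => rw [hexpand]
  simp only [infLap, hpartial]
  simp only [fderiv_apply_single_eq_gradient, map_sum, map_smul, _root_.sum_apply,
    _root_.smul_apply, smul_eq_mul, Finset.mul_sum]
  refine Finset.sum_congr rfl fun i _ => Finset.sum_congr rfl fun j _ => ?_
  ring

end

section

variable {E : Type*} [NormedAddCommGroup E] [NormedSpace ℝ E]
  {f f' : ℝ → ℝ} {f'' : ℝ} {w : E → ℝ} {x : E}

theorem hasFDerivAt_fderiv_comp (hf : ∀ᶠ t in 𝓝 (w x), HasDerivAt f (f' t) t)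
    (hf' : HasDerivAt f' f'' (w x)) (hw : ContDiffAt ℝ 2 w x) :
    HasFDerivAt (fderiv ℝ (f ∘ w))
      (f' (w x) • fderiv ℝ (fderiv ℝ w) x + (f'' • fderiv ℝ w x).smulRight (fderiv ℝ w x)) x := by
  have hw_near : ∀ᶠ y in 𝓝 x, HasFDerivAt w (fderiv ℝ w y) y :=
    (hw.eventually (by simp)).mono fun y hy => (hy.differentiableAt two_ne_zero).hasFDerivAt
  have hf_near : ∀ᶠ y in 𝓝 x, HasDerivAt f (f' (w y)) (w y) :=
    hw.continuousAt.tendsto.eventually hf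
  have hfderiv : fderiv ℝ (f ∘ w) =ᶠ[𝓝 x] fun y => f' (w y) • fderiv ℝ w y := by
    filter_upwards [hw_near, hf_near] with y hwy hfy
    exact (hfy.comp_hasFDerivAt y hwy).fderiv
  exact ((hf'.comp_hasFDerivAt x hw_near.self_of_nhds).smul hw.hasFDerivAt_fderiv)
    |>.congr_of_eventuallyEq hfderiv

end

section

variable {F : Type*} [NormedAddCommGroup F] [InnerProductSpace ℝ F] [CompleteSpace F]
  {f : ℝ → ℝ} {f' : ℝ} {w : F → ℝ} {x : F}

theorem gradient_comp_of_hasDerivAt (hf : HasDerivAt f f' (w x)) (hw : DifferentiableAt ℝ w x) :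
    ∇ (f ∘ w) x = f' • ∇ w x := by
  refine HasGradientAt.gradient ?_
  rw [hasGradientAt_iff_hasFDerivAt, map_smul, toDual_gradient]
  exact hf.comp_hasFDerivAt x hw.hasFDerivAt

end

theorem infLap_comp {n : ℕ} {f f' : ℝ → ℝ} {f'' : ℝ} {w : EuclideanSpace ℝ (Fin n) → ℝ}
    {x : EuclideanSpace ℝ (Fin n)} (hf : ∀ᶠ t in 𝓝 (w x), HasDerivAt f (f' t) t)
    (hf' : HasDerivAt f' f'' (w x)) (hw : ContDiffAt ℝ 2 w x) :
    infLap (f ∘ w) x = f' (w x) ^ 2 * (f'' * ‖∇ w x‖ ^ 4 + f' (w x) * infLap w x) := by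
  rw [infLap_eq_of_hasFDerivAt (hasFDerivAt_fderiv_comp hf hf' hw),
    infLap_eq_of_hasFDerivAt hw.hasFDerivAt_fderiv,
    gradient_comp_of_hasDerivAt hf.self_of_nhds (hw.differentiableAt two_ne_zero)]
  simp [← inner_gradient_left]
  ring

theorem exp_barrier_general {n : ℕ} (Ω : Set (EuclideanSpace ℝ (Fin n))) (hΩo : IsOpen Ω)
    (S η : ℝ) (hη : 0 < η)
    (w : EuclideanSpace ℝ (Fin n) → ℝ) (hw : ContDiffOn ℝ 2 w Ω)
    (hwb : ∀ x ∈ Ω, |w x| ≤ S)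
    (hwsub : ∀ x ∈ Ω, 0 ≤ infLap w x)
    (hwgrad : ∀ x ∈ Ω, η ≤ ‖gradient w x‖) :
    ∀ x ∈ Ω, Real.exp (-S) * η ^ 4 ≤ infLap (fun y => Real.exp (w y) + w y) x := by
  intro x hx
  have hexp : ∀ t, HasDerivAt (fun t => Real.exp t + t) (Real.exp t + 1) t :=
    fun t => (Real.hasDerivAt_exp t).add (hasDerivAt_id t)
  have hlap := infLap_comp (.of_forall hexp) ((Real.hasDerivAt_exp (w x)).add_const 1)
    (hw.contDiffAt (hΩo.mem_nhds hx))
  set a := Real.exp (w x)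
  have ha_pos : 0 < a := Real.exp_pos _
  have ha : Real.exp (-S) ≤ a := Real.exp_le_exp.mpr (neg_le_of_abs_le (hwb x hx))
  have hgrad : η ^ 4 ≤ ‖∇ w x‖ ^ 4 := pow_le_pow_left₀ hη.le (hwgrad x hx) 4
  have hlap_term : 0 ≤ (a + 1) * infLap w x := mul_nonneg (by positivity) (hwsub x hx)
  calc Real.exp (-S) * η ^ 4 ≤ a * ‖∇ w x‖ ^ 4 := by gcongr
    _ ≤ a * ‖∇ w x‖ ^ 4 + (a + 1) * infLap w x := le_add_of_nonneg_right hlap_term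
    _ ≤ (a + 1) ^ 2 * (a * ‖∇ w x‖ ^ 4 + (a + 1) * infLap w x) :=
      le_mul_of_one_le_left (add_nonneg (by positivity) hlap_term) (one_le_pow₀ (by linarith))
    _ = infLap (fun y => Real.exp (w y) + w y) x := hlap.symm

/-- Exponential barrier with gradient bounded below:
if `|w| ≤ S`, `Δ∞w ≥ 0` and `|∇w| ≥ η` in `Ω`, then `v = e^w + w`
satisfies `Δ∞v ≥ e^{−S} η⁴` in `Ω`. -/
theorem exp_barrier {n : ℕ} (Ω : Set (EuclideanSpace ℝ (Fin n))) (hΩo : IsOpen Ω)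
    (S η : ℝ) (hS : 0 < S) (hη : 0 < η)
    (w : EuclideanSpace ℝ (Fin n) → ℝ) (hw : ContDiffOn ℝ 2 w Ω)
    (hwb : ∀ x ∈ Ω, |w x| ≤ S)
    (hwsub : ∀ x ∈ Ω, 0 ≤ infLap w x)
    (hwgrad : ∀ x ∈ Ω, η ≤ ‖gradient w x‖) :
    ∀ x ∈ Ω, Real.exp (-S) * η ^ 4 ≤ infLap (fun y => Real.exp (w y) + w y) x :=
  exp_barrier_general Ω hΩo S η hη w hw hwb hwsub hwgrad
end

section
/- Scaling of subsolutions in the borderline case: Let Ω ⊂ ℝⁿ be open and let f : [0,∞) → ℝ be continuous and satisfy condition (6.1) with constant M > 0, with threshold δ₀ > 0 valid for 0 < t ≤ T. Let v ∈ C(Ω) be a non-negative bounded viscosity subsolution of Δ∞v = M f(v) in Ω with ‖v‖_∞ ≤ T. Then for every 0 < δ ≤ δ₀ the function δv is a viscosity subsolution of Δ∞u = f(u) in Ω. -/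
/-!
Since `Δ∞` is homogeneous of degree three, `φ` touches `δ v` from above exactly when `φ / δ`
touches `v` from above, and then `δ³ M f(v(x₀)) ≤ Δ∞φ(x₀)`; condition (6.1) turns the left side
into an upper bound for `f(δ v(x₀))` when `v(x₀) > 0`. At a zero of `v ≥ 0` the test function
`φ ≥ δ v ≥ 0 = φ(x₀)` has a local minimum, so `Δ∞φ(x₀) = 0`, and the same inequality gives
`f(0) ≤ 0`.
-/

open Set Metric Filter MeasureTheory

/-- Condition (6.1): for every `T > 0` there is `δ₀ > 0` such that
`0 ≤ f(δt) ≤ M δ³ f(t)` for all `0 < t ≤ T` and `0 < δ ≤ δ₀`. -/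
def Cond61 (f : ℝ → ℝ) (M : ℝ) : Prop :=
  ∀ T > 0, ∃ δ₀ > 0, ∀ t : ℝ, 0 < t → t ≤ T → ∀ δ : ℝ, 0 < δ → δ ≤ δ₀ →
    0 ≤ f (δ * t) ∧ f (δ * t) ≤ M * δ ^ 3 * f t

section InfinityLaplacian

variable {n : ℕ}

lemma infLap_const_mul {φ : EuclideanSpace ℝ (Fin n) → ℝ} (hφ : ContDiff ℝ 2 φ) (c : ℝ)
    (x : EuclideanSpace ℝ (Fin n)) :
    infLap (fun y => c * φ y) x = c ^ 3 * infLap φ x := by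
  have hφ₁ : Differentiable ℝ φ := hφ.differentiable (by simp)
  have hDφ : Differentiable ℝ (fderiv ℝ φ) :=
    (hφ.fderiv_right (m := 1) le_rfl).differentiable one_ne_zero
  have hD₁ : fderiv ℝ (fun z => c * φ z) = fun y => c • fderiv ℝ φ y :=
    funext fun y => fderiv_const_mul (hφ₁ y) c
  have hD₂ : ∀ e e' y, fderiv ℝ (fun z => c * fderiv ℝ φ z e) y e'
      = c * fderiv ℝ (fun z => fderiv ℝ φ z e) y e' := by
    intro e e' y
    rw [fderiv_const_mul ((hDφ.clm_apply (differentiable_const e)) y)]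
    rfl
  simp only [infLap, hD₁, FunLike.coe_smul, Pi.smul_apply, smul_eq_mul, hD₂, Finset.mul_sum]
  refine Finset.sum_congr rfl fun i _ => Finset.sum_congr rfl fun j _ => ?_
  ring

lemma infLap_eq_zero_of_isLocalMin {φ : EuclideanSpace ℝ (Fin n) → ℝ}
    {x : EuclideanSpace ℝ (Fin n)} (h : IsLocalMin φ x) : infLap φ x = 0 := by
  simp [infLap, h.fderiv_eq_zero]

end InfinityLaplacian

lemma IsLocalMin.of_isLocalMax_sub {X : Type*} [TopologicalSpace X] {u φ : X → ℝ} {x : X}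
    (hu : IsLocalMin u x) (h : IsLocalMax (fun y => u y - φ y) x) : IsLocalMin φ x := by
  filter_upwards [hu, h] with y huy hy
  linarith

theorem IsViscSubsol.const_mul {n : ℕ} {Ω : Set (EuclideanSpace ℝ (Fin n))}
    {u : EuclideanSpace ℝ (Fin n) → ℝ} {F : EuclideanSpace ℝ (Fin n) → ℝ → ℝ}
    (hu : IsViscSubsol Ω u F) {c : ℝ} (hc : 0 < c) :
    IsViscSubsol Ω (fun x => c * u x) (fun x t => c ^ 3 * F x (t / c)) := by
  intro φ hφ x₀ hx₀ heq hmax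
  have hψ : ContDiff ℝ 2 (fun x => c⁻¹ * φ x) := contDiff_const.mul hφ
  have hψx₀ : c⁻¹ * φ x₀ = u x₀ := by
    rw [heq, inv_mul_cancel_left₀ hc.ne']
  have hψmax : IsLocalMax (fun x => u x - c⁻¹ * φ x) x₀ := by
    filter_upwards [hmax] with y hy
    have hc' : 0 < c⁻¹ := inv_pos.2 hc
    have := mul_le_mul_of_nonneg_left hy hc'.le
    field_simp at this ⊢
    linarith
  have key := hu _ hψ x₀ hx₀ hψx₀ hψmax
  rw [infLap_const_mul hφ, inv_pow] at key
  calc c ^ 3 * F x₀ (φ x₀ / c) = c ^ 3 * F x₀ (c⁻¹ * φ x₀) := by rw [div_eq_inv_mul]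
    _ ≤ c ^ 3 * ((c ^ 3)⁻¹ * infLap φ x₀) := by gcongr
    _ = infLap φ x₀ := by field_simp

theorem scaling_subsolution_borderline_general {n : ℕ} (Ω : Set (EuclideanSpace ℝ (Fin n)))
    (hΩo : IsOpen Ω)
    (f : ℝ → ℝ) (M T δ₀ : ℝ) (hM : 0 < M)
    (hf : ∀ t : ℝ, 0 < t → t ≤ T → ∀ δ : ℝ, 0 < δ → δ ≤ δ₀ →
      0 ≤ f (δ * t) ∧ f (δ * t) ≤ M * δ ^ 3 * f t)
    (v : EuclideanSpace ℝ (Fin n) → ℝ)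
    (hv0 : ∀ x ∈ Ω, 0 ≤ v x)
    (hvb : ∀ x ∈ Ω, v x ≤ T)
    (hsub : IsViscSubsol Ω v (fun _ t => M * f t)) :
    ∀ δ : ℝ, 0 < δ → δ ≤ δ₀ →
      IsViscSubsol Ω (fun x => δ * v x) (fun _ t => f t) := by
  intro δ hδ hδle φ hφ x₀ hx₀ heq hmax
  have key := (hsub.const_mul hδ) φ hφ x₀ hx₀ heq hmax
  simp only [heq, mul_div_cancel_left₀ _ hδ.ne'] at key ⊢
  rcases (hv0 x₀ hx₀).eq_or_lt with hzero | hpos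
  · have hδv_min : IsLocalMin (fun x => δ * v x) x₀ := by
      filter_upwards [hΩo.mem_nhds hx₀] with x hx
      rw [← hzero, mul_zero]
      exact mul_nonneg hδ.le (hv0 x hx)
    have hΔ : infLap φ x₀ = 0 := infLap_eq_zero_of_isLocalMin (hδv_min.of_isLocalMax_sub hmax)
    rw [hΔ, ← hzero] at key
    rw [hΔ, ← hzero, mul_zero]
    exact nonpos_of_mul_nonpos_right (nonpos_of_mul_nonpos_right key (by positivity)) hM
  · calc f (δ * v x₀) ≤ M * δ ^ 3 * f (v x₀) := (hf _ hpos (hvb x₀ hx₀) δ hδ hδle).2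
      _ = δ ^ 3 * (M * f (v x₀)) := by ring
      _ ≤ infLap φ x₀ := key

/-- Scaling of subsolutions in the borderline case `γ = 3`. -/
theorem scaling_subsolution_borderline {n : ℕ} (Ω : Set (EuclideanSpace ℝ (Fin n)))
    (hΩo : IsOpen Ω)
    (f : ℝ → ℝ) (M T δ₀ : ℝ) (hM : 0 < M) (hT : 0 < T) (hδ₀ : 0 < δ₀)
    (hfc : ContinuousOn f (Ici 0))
    (hf : ∀ t : ℝ, 0 < t → t ≤ T → ∀ δ : ℝ, 0 < δ → δ ≤ δ₀ →
      0 ≤ f (δ * t) ∧ f (δ * t) ≤ M * δ ^ 3 * f t)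
    (v : EuclideanSpace ℝ (Fin n) → ℝ)
    (hvc : ContinuousOn v Ω) (hv0 : ∀ x ∈ Ω, 0 ≤ v x)
    (hvb : ∀ x ∈ Ω, v x ≤ T)
    (hsub : IsViscSubsol Ω v (fun _ t => M * f t)) :
    ∀ δ : ℝ, 0 < δ → δ ≤ δ₀ →
      IsViscSubsol Ω (fun x => δ * v x) (fun _ t => f t) :=
  scaling_subsolution_borderline_general Ω hΩo f M T δ₀ hM hf v hv0 hvb hsub
end
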